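/- arXiv:math/0512359 — 2 statements merged into one kernel-verified Lean document; each statement's English description precedes it below -/
import Mathlib

section
/- Let M be the 2×n Hankel matrix, n≥3, over K of characteristic ≠2. Then x_i^2 x_{i+1} ∈ P_2(M) and x_i x_{i+1}^2 ∈ P_2(M) for all 2≤i≤n-1. -/
open MvPolynomial

/-- The variable `x_i` (1-based) in `K[x_1, …, x_N]`. -/
noncomputable def xv (K : Type*) [CommRing K] (N : ℕ) (i : ℕ) : MvPolynomial (Fin N) K :=
  if h : 1 ≤ i ∧ i ≤ N then X (⟨i - 1, by omega⟩ : Fin N) else 0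

/-- The ideal generated by the 2×2 subpermanents of the m×n Hankel matrix
`M_{ij} = x_{i+j-1}` in `K[x_1, …, x_{m+n-1}]`. -/
noncomputable def P2 (K : Type*) [CommRing K] (m n : ℕ) :
    Ideal (MvPolynomial (Fin (m + n - 1)) K) :=
  Ideal.span { p : MvPolynomial (Fin (m + n - 1)) K | ∃ a b c d : ℕ,
    1 ≤ a ∧ a < b ∧ b ≤ m ∧ 1 ≤ c ∧ c < d ∧ d ≤ n ∧
    p = xv K (m + n - 1) (a + c - 1) * xv K (m + n - 1) (b + d - 1)
      + xv K (m + n - 1) (a + d - 1) * xv K (m + n - 1) (b + c - 1) }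

lemma gen_mem (K : Type*) [Field K] (n c d : ℕ) (hc : 1 ≤ c) (hcd : c < d) (hd : d ≤ n) :
    xv K (2 + n - 1) c * xv K (2 + n - 1) (d + 1)
      + xv K (2 + n - 1) d * xv K (2 + n - 1) (c + 1) ∈ P2 K 2 n := by
  refine Ideal.subset_span ⟨1, 2, c, d, le_refl 1, one_lt_two, le_refl 2, hc, hcd, hd, ?_⟩
  have e1 : 1 + c - 1 = c := by omega
  have e2 : 2 + d - 1 = d + 1 := by omega
  have e3 : 1 + d - 1 = d := by omega
  have e4 : 2 + c - 1 = c + 1 := by omega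
  rw [e1, e2, e3, e4]

lemma cancel_two {K : Type*} [Field K] (hK : ringChar K ≠ 2) {N : ℕ}
    {T : MvPolynomial (Fin N) K} {I : Ideal (MvPolynomial (Fin N) K)}
    (h : 2 * T ∈ I) : T ∈ I := by
  have h2K : (2 : K) ≠ 0 := by
    intro h0
    exact hK (CharP.ringChar_of_prime_eq_zero Nat.prime_two h0)
  have : T = C (2 : K)⁻¹ * (2 * T) := by
    rw [show ((2 : MvPolynomial (Fin N) K)) = C (2 : K) from (map_ofNat (C : K →+* MvPolynomial (Fin N) K) 2).symm, ← mul_assoc, ← C_mul,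
      inv_mul_cancel₀ h2K, C_1, one_mul]
  rw [this]
  exact Ideal.mul_mem_left _ _ h

/-- For the 2×n Hankel matrix, `x_i^2 x_{i+1}` and `x_i x_{i+1}^2` lie in `P_2(M)`
for all `2 ≤ i ≤ n-1`. -/
theorem stmt6 {K : Type*} [Field K] (hK : ringChar K ≠ 2) (n : ℕ) (hn : 3 ≤ n) :
    ∀ i : ℕ, 2 ≤ i → i ≤ n - 1 →
      xv K (2 + n - 1) i ^ 2 * xv K (2 + n - 1) (i + 1) ∈ P2 K 2 n ∧
      xv K (2 + n - 1) i * xv K (2 + n - 1) (i + 1) ^ 2 ∈ P2 K 2 n := by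
  intro i h2 hle
  set u := xv K (2 + n - 1) (i - 1) with hu
  set v := xv K (2 + n - 1) i with hv
  set w := xv K (2 + n - 1) (i + 1) with hw
  set z := xv K (2 + n - 1) (i + 2) with hz
  have e1 : i - 1 + 1 = i := by omega
  have g1 : u * w + v * v ∈ P2 K 2 n := by
    have := gen_mem K n (i - 1) i (by omega) (by omega) (by omega)
    rwa [e1] at this
  have g2 : u * z + w * v ∈ P2 K 2 n := by
    have := gen_mem K n (i - 1) (i + 1) (by omega) (by omega) (by omega)
    rwa [e1, show i + 1 + 1 = i + 2 from rfl] at this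
  have g3 : v * z + w * w ∈ P2 K 2 n := by
    have := gen_mem K n i (i + 1) (by omega) (by omega) (by omega)
    rwa [show i + 1 + 1 = i + 2 from rfl] at this
  constructor
  · apply cancel_two hK
    have key : 2 * (v ^ 2 * w)
        = w * (u * w + v * v) + v * (u * z + w * v) - u * (v * z + w * w) := by ring
    rw [key]
    exact Ideal.sub_mem _ (Ideal.add_mem _ (Ideal.mul_mem_left _ _ g1)
      (Ideal.mul_mem_left _ _ g2)) (Ideal.mul_mem_left _ _ g3)
  · apply cancel_two hK
    have key : 2 * (v * w ^ 2)
        = w * (u * z + w * v) + v * (v * z + w * w) - z * (u * w + v * v) := by ring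
    rw [key]
    exact Ideal.sub_mem _ (Ideal.add_mem _ (Ideal.mul_mem_left _ _ g2)
      (Ideal.mul_mem_left _ _ g3)) (Ideal.mul_mem_left _ _ g1)
end

section
/- Let M be the 3×3 Hankel matrix over K of characteristic ≠2, with entries M_{ij}=x_{i+j-1} in K[x_1,…,x_5]. Then α=x_1x_3x_5∉P_2(M) and (x_1,…,x_5)·α⊆P_2(M); hence (x_1,…,x_5) is an associated prime of P_2(M). -/
open MvPolynomial

/-!
Write `c_ijk` for the coefficient of `x_i x_j x_k`. The functional
`L = c₁₄₄ + c₂₂₅ + c₃₃₃ - c₁₃₅ - c₂₃₄` kills every multiple `r g` of every generator `g` of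
`P₂(M)`: only two coefficients of `r` survive in `L (r g)`, at the same monomial and with opposite
signs. Since `L α = -1`, `α ∉ P₂(M)`. Conversely each `2 xᵢ α` is an explicit combination of the
generators, so for `2 ≠ 0` the colon ideal `(P₂(M) : α)` is a proper ideal containing the maximal
ideal `(x₁, …, x₅)`, hence equal to it.
-/

theorem map_eq_zero_of_mem_span_range {R M F ι : Type*} [CommSemiring R] [AddCommMonoid M]
    [FunLike F R M] [AddMonoidHomClass F R M] [Fintype ι] (L : F) {g : ι → R}
    (h : ∀ r i, L (r * g i) = 0) {p : R} (hp : p ∈ Ideal.span (Set.range g)) : L p = 0 := by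
  obtain ⟨c, rfl⟩ := Ideal.mem_span_range_iff_exists_fun.mp hp
  simp [map_sum, h]

namespace MvPolynomial

variable {σ R K : Type*} [CommRing R] [Field K]

theorem ker_constantCoeff_eq_idealOfVars :
    RingHom.ker (constantCoeff : MvPolynomial σ R →+* R) = idealOfVars σ R := by
  ext p
  rw [RingHom.mem_ker, ← pow_one (idealOfVars σ R), mem_pow_idealOfVars_iff']
  simp [Finsupp.degree_eq_zero_iff, constantCoeff_eq]

theorem isMaximal_idealOfVars : (idealOfVars σ K).IsMaximal :=
  ker_constantCoeff_eq_idealOfVars (R := K) ▸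
    RingHom.ker_isMaximal_of_surjective constantCoeff fun r => ⟨C r, constantCoeff_C σ r⟩

theorem colon_span_singleton_eq_idealOfVars {I : Ideal (MvPolynomial σ K)}
    {a : MvPolynomial σ K} (ha : a ∉ I) (hX : ∀ i, X i * a ∈ I) :
    I.colon (Ideal.span {a}) = idealOfVars σ K := by
  refine (isMaximal_idealOfVars.eq_of_le ?_ ?_).symm
  · rw [Ne, Ideal.eq_top_iff_one, Submodule.mem_colon_span_singleton, one_smul]
    exact ha
  · rw [Ideal.span_le, Set.range_subset_iff]
    exact fun i => Submodule.mem_colon_span_singleton.mpr (hX i)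

end MvPolynomial

open Finsupp

section

variable (K : Type*) [CommRing K]

noncomputable def hankel33Subperm : Fin 6 → MvPolynomial (Fin 5) K :=
  ![X 0 * X 2 + X 1 * X 1, X 0 * X 3 + X 1 * X 2, X 0 * X 4 + X 2 * X 2,
    X 1 * X 3 + X 2 * X 2, X 1 * X 4 + X 2 * X 3, X 2 * X 4 + X 3 * X 3]

noncomputable def hankel33Alpha : MvPolynomial (Fin 5) K := X 0 * X 2 * X 4

noncomputable def hankel33Dual : MvPolynomial (Fin 5) K →ₗ[K] K :=
  lcoeff K (single 0 1 + single 3 2) + lcoeff K (single 1 2 + single 4 1) +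
    lcoeff K (single 2 3) - lcoeff K (single 0 1 + single 2 1 + single 4 1) -
    lcoeff K (single 1 1 + single 2 1 + single 3 1)

variable {K}

theorem xv_of_le {N k : ℕ} (h1 : 1 ≤ k) (h2 : k ≤ N) :
    xv K N k = X ⟨k - 1, by omega⟩ :=
  dif_pos ⟨h1, h2⟩

theorem setOf_xv_eq_range_X (N : ℕ) :
    {p | ∃ k, 1 ≤ k ∧ k ≤ N ∧ p = xv K N k} = Set.range X := by
  ext p
  constructor
  · rintro ⟨k, h1, h2, rfl⟩
    exact ⟨_, (xv_of_le h1 h2).symm⟩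
  · rintro ⟨i, rfl⟩
    refine ⟨i + 1, by omega, i.isLt, ?_⟩
    rw [xv_of_le (by omega) i.isLt]
    rfl

theorem P2_three_three : P2 K 3 3 = Ideal.span (Set.range (hankel33Subperm K)) := by
  apply le_antisymm
  · rw [P2, Ideal.span_le]
    rintro p ⟨a, b, c, d, ha, hab, hb, hc, hcd, hd, rfl⟩
    obtain ⟨ha', hc'⟩ : a ≤ 2 ∧ c ≤ 2 := by omega
    interval_cases a <;> interval_cases b <;> interval_cases c <;> interval_cases d <;>
      simp only [xv_of_le, Nat.reduceAdd, Nat.reduceSub, Nat.one_le_ofNat, Nat.reduceLeDiff] <;>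
      exact Ideal.subset_span (by simp [hankel33Subperm, mul_comm])
  · have subperm_mem (a b c d : ℕ) (h : 1 ≤ a ∧ a < b ∧ b ≤ 3 ∧ 1 ≤ c ∧ c < d ∧ d ≤ 3) :
        xv K 5 (a + c - 1) * xv K 5 (b + d - 1) + xv K 5 (a + d - 1) * xv K 5 (b + c - 1) ∈
          P2 K 3 3 :=
      Ideal.subset_span ⟨a, b, c, d, h.1, h.2.1, h.2.2.1, h.2.2.2.1, h.2.2.2.2.1, h.2.2.2.2.2, rfl⟩
    rw [Ideal.span_le, Set.range_subset_iff]
    intro j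
    fin_cases j
    · simpa [hankel33Subperm, xv_of_le] using subperm_mem 1 2 1 2 (by norm_num)
    · simpa [hankel33Subperm, xv_of_le] using subperm_mem 1 3 1 2 (by norm_num)
    · simpa [hankel33Subperm, xv_of_le] using subperm_mem 1 3 1 3 (by norm_num)
    · simpa [hankel33Subperm, xv_of_le] using subperm_mem 1 2 2 3 (by norm_num)
    · simpa [hankel33Subperm, xv_of_le] using subperm_mem 1 3 2 3 (by norm_num)
    · simpa [hankel33Subperm, xv_of_le] using subperm_mem 2 3 2 3 (by norm_num)

theorem hankel33Dual_mul_subperm (r : MvPolynomial (Fin 5) K) (j : Fin 6) :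
    hankel33Dual K (r * hankel33Subperm K j) = 0 := by
  fin_cases j <;>
  · simp [hankel33Subperm, hankel33Dual, mul_add, ← mul_assoc, coeff_mul_X']
    rw [sub_eq_zero]; congr 1; ext a; fin_cases a <;> simp

theorem hankel33Dual_alpha : hankel33Dual K (hankel33Alpha K) = -1 := by
  rw [hankel33Alpha, ← one_mul (X 0)]
  simp [hankel33Dual, coeff_mul_X']

theorem hankel33Alpha_notMem_P2 [Nontrivial K] : hankel33Alpha K ∉ P2 K 3 3 := by
  intro h
  rw [P2_three_three] at h
  have h0 := map_eq_zero_of_mem_span_range (hankel33Dual K) hankel33Dual_mul_subperm h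
  rw [hankel33Dual_alpha] at h0
  exact neg_ne_zero.mpr one_ne_zero h0

end

theorem X_mul_hankel33Alpha_mem_P2 {K : Type*} [Field K] (h2 : (2 : K) ≠ 0) (i : Fin 5) :
    X i * hankel33Alpha K ∈ P2 K 3 3 := by
  have h2' : IsUnit (2 : MvPolynomial (Fin 5) K) := by
    rw [← map_ofNat C 2]
    exact (IsUnit.mk0 _ h2).map C
  rw [← Ideal.unit_mul_mem_iff_mem _ h2', P2_three_three, Ideal.mem_span_range_iff_exists_fun]
  fin_cases i
  · refine ⟨![-(X 2 * X 2), X 1 * X 2, 2 * (X 0 * X 2), -(X 0 * X 2), 0, 0], ?_⟩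
    simp [Fin.sum_univ_succ, hankel33Subperm, hankel33Alpha]; ring
  · refine ⟨![X 2 * X 3, 2 * (X 0 * X 4) - X 1 * X 3, -(2 * (X 0 * X 3)), X 0 * X 3, 0, 0], ?_⟩
    simp [Fin.sum_univ_succ, hankel33Subperm, hankel33Alpha]; ring
  · refine ⟨![X 2 * X 4, -(X 1 * X 4), 0, X 0 * X 4, 0, 0], ?_⟩
    simp [Fin.sum_univ_succ, hankel33Subperm, hankel33Alpha]; ring
  · refine ⟨![X 3 * X 4, X 2 * X 4, 0, -(X 1 * X 4), 0, 0], ?_⟩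
    simp [Fin.sum_univ_succ, hankel33Subperm, hankel33Alpha]; ring
  · refine ⟨![0, X 3 * X 4, 2 * (X 2 * X 4) - X 3 * X 3, -(2 * (X 2 * X 4)), X 2 * X 3, 0], ?_⟩
    simp [Fin.sum_univ_succ, hankel33Subperm, hankel33Alpha]; ring

/-- For the 3×3 Hankel matrix, `α = x_1 x_3 x_5 ∉ P_2(M)`,
`(x_1, …, x_5)·α ⊆ P_2(M)`, and hence `(x_1, …, x_5)` is an associated prime of
`P_2(M)`, namely `(P_2(M) : α) = (x_1, …, x_5)`. -/
theorem stmt18 {K : Type*} [Field K] (hK : ringChar K ≠ 2) :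
    xv K (3 + 3 - 1) 1 * xv K (3 + 3 - 1) 3 * xv K (3 + 3 - 1) 5 ∉ P2 K 3 3 ∧
    (∀ k : ℕ, 1 ≤ k → k ≤ 5 →
      xv K (3 + 3 - 1) k *
        (xv K (3 + 3 - 1) 1 * xv K (3 + 3 - 1) 3 * xv K (3 + 3 - 1) 5) ∈ P2 K 3 3) ∧
    Submodule.colon (P2 K 3 3)
        (Ideal.span {xv K (3 + 3 - 1) 1 * xv K (3 + 3 - 1) 3 * xv K (3 + 3 - 1) 5}) =
      Ideal.span { p : MvPolynomial (Fin (3 + 3 - 1)) K |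
        ∃ k : ℕ, 1 ≤ k ∧ k ≤ 5 ∧ p = xv K (3 + 3 - 1) k } := by
  have hα : xv K (3 + 3 - 1) 1 * xv K (3 + 3 - 1) 3 * xv K (3 + 3 - 1) 5 = hankel33Alpha K := by
    rw [xv_of_le le_rfl (by norm_num), xv_of_le (by norm_num) (by norm_num),
      xv_of_le (by norm_num) le_rfl]
    rfl
  have hX := X_mul_hankel33Alpha_mem_P2 (Ring.two_ne_zero hK)
  rw [hα, setOf_xv_eq_range_X]
  refine ⟨hankel33Alpha_notMem_P2, fun k h1 h5 => ?_,
    colon_span_singleton_eq_idealOfVars hankel33Alpha_notMem_P2 hX⟩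
  rw [xv_of_le h1 h5]
  exact hX _
end
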